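/- Let G be a linearly ordered abelian group, n ∈ ℕ with n ≥ 2, and a ∈ G. Then H'_{n,a} = ⋃_{p prime, p ∣ n} H'_{p,a}, and moreover ⋂{H_{n,c} : c ∈ G, H_{n,c} ⊋ H'_{n,a}} = ⋂_{p prime, p ∣ n} ⋂{H_{p,c} : c ∈ G, H_{p,c} ⊋ H'_{p,a}}, where an intersection over an empty family is G. -/

import Mathlib

open Pointwise

/-- The set `nG = {n·g : g ∈ G}`. -/
def NG (G : Type*) [AddCommGroup G] (n : ℕ) : Set G :=
  {x : G | ∃ g : G, n • g = x}

/-- `H` is a convex subgroup of the linearly ordered abelian group `G`. -/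
def IsConvexSubgroup {G : Type*} [AddCommGroup G] [LinearOrder G] [IsOrderedAddMonoid G] (H : Set G) : Prop :=
  (0 : G) ∈ H ∧ (∀ x ∈ H, ∀ y ∈ H, x + y ∈ H) ∧ (∀ x ∈ H, -x ∈ H) ∧
    ∀ a ∈ H, ∀ b : G, 0 ≤ b → b ≤ a → b ∈ H

/-- `H_{n,a}`: the largest convex subgroup `H` with `a ∉ H + nG` (it is the union of
all such subgroups), and `{0}` if `a ∈ nG` (in which case the union is empty). -/
def Hna {G : Type*} [AddCommGroup G] [LinearOrder G] [IsOrderedAddMonoid G] (n : ℕ) (a : G) : Set G :=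
  {0} ∪ ⋃₀ {H : Set G | IsConvexSubgroup H ∧ a ∉ H + NG G n}

/-- `H'_{n,b} = ⋃ {H_{n,a} : a ∈ G, b ∉ H_{n,a}}`, with `{0}` for the empty union. -/
def Hnb' {G : Type*} [AddCommGroup G] [LinearOrder G] [IsOrderedAddMonoid G] (n : ℕ) (b : G) : Set G :=
  {0} ∪ ⋃₀ {H : Set G | ∃ a : G, H = Hna n a ∧ b ∉ Hna n a}

/-- `G^{[n]}_C = ⋂ {H + nG : H convex subgroup, H ⊋ C}`, with `G` for the empty
intersection. -/
def Gbr {G : Type*} [AddCommGroup G] [LinearOrder G] [IsOrderedAddMonoid G] (C : Set G) (n : ℕ) : Set G :=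
  ⋂₀ {S : Set G | ∃ H : Set G, IsConvexSubgroup H ∧ C ⊂ H ∧ S = H + NG G n}

/-!
For `n ≥ 2` the family `{H_{n,c} : c ∈ G}` is the union over primes `p ∣ n` of the families
`{H_{p,c}}`. Both identities follow from this, since `H'_{n,a}` is built from that family alone and,
convex subgroups forming a chain, `H'_{n,a} ⊊ H_{n,c}` exactly when `a ∈ H_{n,c} ≠ {0}`.

Dividing by `n/p` in `H + nG` gives `H_{p,g} = H_{n,(n/p)g}`. Conversely, let `H = H_{n,x}`, `n` not
prime and `p ∣ n` prime: if `x ∉ H + pG` then `H = H_{p,x}`; otherwise `x = h + pg` with `h ∈ H`,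
and translating by `h` and then dividing by `p` gives `H = H_{n,pg} = H_{n/p,g}`, so induction on
`n` applies.
-/

namespace IsConvexSubgroup

variable {G : Type*} [AddCommGroup G] [LinearOrder G] [IsOrderedAddMonoid G] {H K : Set G}

theorem zero_mem (hH : IsConvexSubgroup H) : (0 : G) ∈ H := hH.1

theorem add_mem (hH : IsConvexSubgroup H) {x y : G} (hx : x ∈ H) (hy : y ∈ H) : x + y ∈ H :=
  hH.2.1 x hx y hy

theorem neg_mem (hH : IsConvexSubgroup H) {x : G} (hx : x ∈ H) : -x ∈ H := hH.2.2.1 x hx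

theorem mem_of_le (hH : IsConvexSubgroup H) {a b : G} (ha : a ∈ H) (hb : 0 ≤ b) (hba : b ≤ a) :
    b ∈ H :=
  hH.2.2.2 a ha b hb hba

theorem neg_mem_iff (hH : IsConvexSubgroup H) {x : G} : -x ∈ H ↔ x ∈ H :=
  ⟨fun hx => neg_neg x ▸ hH.neg_mem hx, hH.neg_mem⟩

theorem abs_mem_iff (hH : IsConvexSubgroup H) {x : G} : |x| ∈ H ↔ x ∈ H := by
  rcases abs_choice x with h | h <;> rw [h]
  exact hH.neg_mem_iff

theorem nsmul_mem (hH : IsConvexSubgroup H) {x : G} (hx : x ∈ H) (m : ℕ) : m • x ∈ H := by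
  induction m with
  | zero => simpa using hH.zero_mem
  | succ k ih => rw [succ_nsmul]; exact hH.add_mem ih hx

theorem mem_of_nsmul_mem (hH : IsConvexSubgroup H) {m : ℕ} (hm : m ≠ 0) {x : G}
    (hx : m • x ∈ H) : x ∈ H := by
  rw [← hH.abs_mem_iff, abs_nsmul] at hx
  exact hH.abs_mem_iff.1 (hH.mem_of_le hx (abs_nonneg x) (le_self_nsmul (abs_nonneg x) hm))

theorem total (hH : IsConvexSubgroup H) (hK : IsConvexSubgroup K) : H ⊆ K ∨ K ⊆ H := by
  refine or_iff_not_imp_left.2 fun hHK y hy => ?_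
  obtain ⟨x, hxH, hxK⟩ := Set.not_subset.1 hHK
  rcases le_total |y| |x| with hle | hle
  · exact hH.abs_mem_iff.1 (hH.mem_of_le (hH.abs_mem_iff.2 hxH) (abs_nonneg y) hle)
  · exact absurd (hK.abs_mem_iff.1 (hK.mem_of_le (hK.abs_mem_iff.2 hy) (abs_nonneg x) hle)) hxK

theorem add_mem_add {S : Set G} (hK : IsConvexSubgroup K) {k z : G} (hk : k ∈ K)
    (hz : z ∈ K + S) : k + z ∈ K + S := by
  obtain ⟨k', hk', s, hs, rfl⟩ := hz
  exact ⟨k + k', hK.add_mem hk hk', s, hs, add_assoc k k' s⟩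

theorem nsmul_mem_add_NG_mul_iff (hK : IsConvexSubgroup K) {m p : ℕ} (hm : m ≠ 0) {x : G} :
    m • x ∈ K + NG G (m * p) ↔ x ∈ K + NG G p := by
  constructor
  · rintro ⟨k, hk, _, ⟨g, rfl⟩, hx⟩
    have hmk : m • (x - p • g) = k := by
      rw [smul_sub, ← show k + (m * p) • g = m • x from hx, mul_smul, add_sub_cancel_right]
    exact ⟨x - p • g, hK.mem_of_nsmul_mem hm (hmk ▸ hk), p • g, ⟨g, rfl⟩, sub_add_cancel x _⟩
  · rintro ⟨k, hk, _, ⟨g, rfl⟩, rfl⟩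
    exact ⟨m • k, hK.nsmul_mem hk m, (m * p) • g, ⟨g, rfl⟩, by rw [mul_smul, smul_add]⟩

end IsConvexSubgroup

theorem NG_subset_NG_of_dvd {G : Type*} [AddCommGroup G] {p n : ℕ} (h : p ∣ n) :
    NG G n ⊆ NG G p := by
  rintro _ ⟨g, rfl⟩
  obtain ⟨k, rfl⟩ := h
  exact ⟨k • g, by rw [mul_smul]⟩

section

variable {G : Type*} [AddCommGroup G] [LinearOrder G] [IsOrderedAddMonoid G]

theorem isConvexSubgroup_zero_union_sUnion {S : Set (Set G)}
    (hS : ∀ H ∈ S, IsConvexSubgroup H) : IsConvexSubgroup ({0} ∪ ⋃₀ S) := by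
  refine ⟨Or.inl rfl, ?_, ?_, ?_⟩
  · rintro x (rfl | ⟨H, hH, hx⟩) y hy
    · simpa using hy
    rcases hy with rfl | ⟨K, hK, hy⟩
    · exact Or.inr ⟨H, hH, by simpa using hx⟩
    rcases (hS H hH).total (hS K hK) with hHK | hKH
    · exact Or.inr ⟨K, hK, (hS K hK).add_mem (hHK hx) hy⟩
    · exact Or.inr ⟨H, hH, (hS H hH).add_mem hx (hKH hy)⟩
  · rintro x (rfl | ⟨H, hH, hx⟩)
    · exact Or.inl neg_zero
    · exact Or.inr ⟨H, hH, (hS H hH).neg_mem hx⟩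
  · rintro x (rfl | ⟨H, hH, hx⟩) b hb hbx
    · exact Or.inl (le_antisymm hbx hb)
    · exact Or.inr ⟨H, hH, (hS H hH).mem_of_le hx hb hbx⟩

theorem isConvexSubgroup_Hna (n : ℕ) (x : G) : IsConvexSubgroup (Hna n x) :=
  isConvexSubgroup_zero_union_sUnion fun _ hH => hH.1

@[simp]
theorem zero_mem_Hna (n : ℕ) (x : G) : (0 : G) ∈ Hna n x := Or.inl rfl

theorem subset_Hna {H : Set G} {n : ℕ} {x : G} (hH : IsConvexSubgroup H)
    (hx : x ∉ H + NG G n) : H ⊆ Hna n x :=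
  fun _ hy => Or.inr ⟨H, ⟨hH, hx⟩, hy⟩

theorem not_mem_Hna_add_NG {n : ℕ} {x : G} (hx : x ∉ NG G n) : x ∉ Hna n x + NG G n := by
  rw [Set.mem_add]
  rintro ⟨h, hh | ⟨H, ⟨_, hxH⟩, hh⟩, s, hs, rfl⟩
  · rw [Set.mem_singleton_iff.1 hh, zero_add] at hx
    exact hx hs
  · exact hxH ⟨h, hh, s, hs, rfl⟩

theorem Hna_of_mem_NG {n : ℕ} {x : G} (hx : x ∈ NG G n) : Hna n x = {0} := by
  refine subset_antisymm ?_ Set.subset_union_left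
  rintro y (hy | ⟨H, ⟨hH, hxH⟩, _⟩)
  · exact hy
  · exact absurd ⟨0, hH.zero_mem, x, hx, zero_add x⟩ hxH

theorem Hna_subset_Hna_of_dvd {p n : ℕ} (h : p ∣ n) (x : G) : Hna p x ⊆ Hna n x :=
  Set.union_subset_union_right _ <| Set.sUnion_mono fun _ ⟨hH, hx⟩ =>
    ⟨hH, fun hxn => hx (Set.add_subset_add_left (NG_subset_NG_of_dvd h) hxn)⟩

theorem Hna_mul_nsmul {m p : ℕ} (hm : m ≠ 0) (x : G) : Hna (m * p) (m • x) = Hna p x := by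
  unfold Hna
  congr 2
  ext H
  simp only [Set.mem_ofPred_eq, and_congr_right_iff]
  exact fun hH => not_congr (hH.nsmul_mem_add_NG_mul_iff hm)

theorem Hna_subset_of_sub_mem {n : ℕ} {x y : G} (h : x - y ∈ Hna n x) : Hna n x ⊆ Hna n y := by
  by_cases hx : x ∈ NG G n
  · rw [Hna_of_mem_NG hx]
    exact Set.singleton_subset_iff.2 (zero_mem_Hna n y)
  refine subset_Hna (isConvexSubgroup_Hna n x) fun hy => not_mem_Hna_add_NG hx ?_
  simpa using (isConvexSubgroup_Hna n x).add_mem_add h hy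

theorem Hna_eq_of_sub_mem {n : ℕ} {x y : G} (h : x - y ∈ Hna n x) : Hna n y = Hna n x := by
  have hxy := Hna_subset_of_sub_mem h
  refine subset_antisymm (Hna_subset_of_sub_mem ?_) hxy
  rw [← neg_sub]
  exact (isConvexSubgroup_Hna n y).neg_mem (hxy h)

theorem exists_prime_dvd_Hna_eq {n : ℕ} (hn : 2 ≤ n) (x : G) :
    ∃ p, p.Prime ∧ p ∣ n ∧ ∃ g : G, Hna n x = Hna p g := by
  induction n using Nat.strong_induction_on generalizing x with
  | _ n ih =>
  by_cases hn_prime : n.Prime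
  · exact ⟨n, hn_prime, dvd_rfl, x, rfl⟩
  obtain ⟨p, hp, hpn⟩ := Nat.exists_prime_and_dvd (by omega : n ≠ 1)
  by_cases hx : x ∈ Hna n x + NG G p
  · obtain ⟨h, hh, _, ⟨g, rfl⟩, hxg⟩ := Set.mem_add.1 hx
    obtain ⟨m, rfl⟩ := hpn
    have hm : 2 ≤ m := by
      rcases m with _ | _ | m
      · omega
      · exact absurd (by simpa using hp) hn_prime
      · omega
    obtain ⟨q, hq, hqm, g', hg'⟩ := ih m (by nlinarith [hp.two_le]) hm g
    refine ⟨q, hq, dvd_mul_of_dvd_right hqm p, g', ?_⟩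
    calc Hna (p * m) x = Hna (p * m) (p • g) :=
          (Hna_eq_of_sub_mem (by rwa [eq_sub_of_add_eq hxg] at hh)).symm
      _ = Hna m g := Hna_mul_nsmul hp.ne_zero g
      _ = Hna q g' := hg'
  · exact ⟨p, hp, hpn, x, subset_antisymm
      (subset_Hna (isConvexSubgroup_Hna n x) hx) (Hna_subset_Hna_of_dvd hpn x)⟩

theorem range_Hna {n : ℕ} (hn : 2 ≤ n) :
    Set.range (Hna (G := G) n) = ⋃ p ∈ {p : ℕ | p.Prime ∧ p ∣ n}, Set.range (Hna p) := by
  ext H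
  simp only [Set.mem_range, Set.mem_iUnion, Set.mem_ofPred_eq, exists_prop]
  constructor
  · rintro ⟨x, rfl⟩
    obtain ⟨p, hp, hpn, g, hg⟩ := exists_prime_dvd_Hna_eq hn x
    exact ⟨p, ⟨hp, hpn⟩, g, hg.symm⟩
  · rintro ⟨p, ⟨hp, hpn⟩, x, rfl⟩
    refine ⟨(n / p) • x, ?_⟩
    have := Hna_mul_nsmul (p := p) (Nat.div_pos (Nat.le_of_dvd (by omega) hpn) hp.pos).ne' x
    rwa [Nat.div_mul_cancel hpn] at this

theorem Hnb'_eq (n : ℕ) (b : G) : Hnb' n b = {0} ∪ ⋃₀ {H ∈ Set.range (Hna n) | b ∉ H} := by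
  unfold Hnb'
  congr 2
  ext H
  constructor
  · rintro ⟨a, rfl, hb⟩
    exact ⟨⟨a, rfl⟩, hb⟩
  · rintro ⟨⟨a, rfl⟩, hb⟩
    exact ⟨a, rfl, hb⟩

theorem Hnb'_zero (n : ℕ) : Hnb' n (0 : G) = {0} := by
  simp [Hnb']

theorem Hnb'_subset_Hna {n : ℕ} {a c : G} (ha : a ∈ Hna n c) : Hnb' n a ⊆ Hna n c := by
  rintro y (hy | ⟨_, ⟨x, rfl, hax⟩, hy⟩)
  · rw [Set.mem_singleton_iff.1 hy]
    exact zero_mem_Hna n c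
  rcases (isConvexSubgroup_Hna n x).total (isConvexSubgroup_Hna n c) with hxc | hcx
  · exact hxc hy
  · exact absurd (hcx ha) hax

theorem Hnb'_ssubset_Hna_iff {n : ℕ} {a c : G} :
    Hnb' n a ⊂ Hna n c ↔ a ∈ Hna n c ∧ Hna n c ≠ {0} := by
  constructor
  · intro h
    have ha : a ∈ Hna n c := by
      by_contra ha
      exact h.2 fun y hy => Or.inr ⟨_, ⟨c, rfl, ha⟩, hy⟩
    refine ⟨ha, fun hc => h.2 ?_⟩
    rw [hc]
    exact Set.subset_union_left
  · rintro ⟨ha, hc⟩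
    refine (Hnb'_subset_Hna ha).ssubset_of_ne fun heq => hc ?_
    have ha0 : a = 0 := by
      rcases heq ▸ ha with h | ⟨_, ⟨x, rfl, hax⟩, hx⟩
      · exact h
      · exact absurd hx hax
    subst ha0
    rw [← heq, Hnb'_zero]

theorem setOf_Hna_ssuperset_Hnb' (n : ℕ) (a : G) :
    {H : Set G | ∃ c : G, H = Hna n c ∧ Hnb' n a ⊂ H} =
      {H ∈ Set.range (Hna n) | a ∈ H ∧ H ≠ {0}} := by
  ext H
  constructor
  · rintro ⟨c, rfl, h⟩
    exact ⟨⟨c, rfl⟩, Hnb'_ssubset_Hna_iff.1 h⟩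
  · rintro ⟨⟨c, rfl⟩, h⟩
    exact ⟨c, rfl, Hnb'_ssubset_Hna_iff.2 h⟩

end

/-- For `n ≥ 2` and `a ∈ G`: `H'_{n,a} = ⋃_{p prime, p ∣ n} H'_{p,a}`,
and the intersection of all `H_{n,c}` strictly containing `H'_{n,a}` equals the
intersection over prime divisors `p` of `n` of the intersections of all `H_{p,c}`
strictly containing `H'_{p,a}` (empty intersections being all of `G`, i.e. `Set.univ`). -/
theorem Hnb'_eq_union_primes_and_inter {G : Type*} [AddCommGroup G] [LinearOrder G] [IsOrderedAddMonoid G]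
    (n : ℕ) (hn : 2 ≤ n) (a : G) :
    Hnb' n a = (⋃ p ∈ {p : ℕ | p.Prime ∧ p ∣ n}, Hnb' p a) ∧
    ⋂₀ {H : Set G | ∃ c : G, H = Hna n c ∧ Hnb' n a ⊂ H} =
      ⋂ p ∈ {p : ℕ | p.Prime ∧ p ∣ n},
        ⋂₀ {H : Set G | ∃ c : G, H = Hna p c ∧ Hnb' p a ⊂ H} := by
  constructor
  · have hprime : n.minFac.Prime ∧ n.minFac ∣ n := ⟨Nat.minFac_prime (by omega), n.minFac_dvd⟩
    simp only [Hnb'_eq, range_Hna hn]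
    ext y
    simp only [Set.mem_union, Set.mem_singleton_iff, Set.mem_sUnion, Set.mem_iUnion,
      Set.mem_ofPred_eq, exists_prop]
    aesop
  · simp only [setOf_Hna_ssuperset_Hnb', range_Hna hn]
    ext y
    simp only [Set.mem_sInter, Set.mem_iInter, Set.mem_iUnion, Set.mem_ofPred_eq,
      exists_prop]
    aesop
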